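/- arXiv:1601.01236 — 2 statements merged into one kernel-verified Lean document; each statement's English description precedes it below -/
import Mathlib

section
/- Let |0⟩, |1⟩ be the standard basis of ℂ² and |+⟩ = (|0⟩ + |1⟩)/√2, and fix 0 < p < 1. Consider the four-qubit density matrix ρ = p (|0⟩⟨0| ⊗ |0⟩⟨0|) ⊗ (|0⟩⟨0| ⊗ |0⟩⟨0|) + (1−p) (|1⟩⟨1| ⊗ |+⟩⟨+|) ⊗ (|+⟩⟨+| ⊗ |1⟩⟨1|) on (ℂ² ⊗ ℂ²) ⊗ (ℂ² ⊗ ℂ²), with bipartition A = first two qubits, B = last two qubits. Then: (i) ρ is classically correlated with respect to the bipartition A | B; and (ii) the partial trace of ρ over the first and fourth qubits equals σ_p = p |0⟩⟨0| ⊗ |0⟩⟨0| + (1−p) |+⟩⟨+| ⊗ |+⟩⟨+| on ℂ² ⊗ ℂ², which is not classically correlated. Hence ρ is a classically correlated state with a quantum correlated reduction that preserves the local bipartition. -/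
open Matrix
open scoped Kronecker ComplexOrder

/-- A density matrix: positive semidefinite with unit trace. -/
def IsDensity {N : Type*} [Fintype N] (ρ : Matrix N N ℂ) : Prop :=
  ρ.PosSemidef ∧ ρ.trace = 1

/-- The rank-one projector `|v⟩⟨v|`. -/
def proj {N : Type*} (v : N → ℂ) : Matrix N N ℂ :=
  Matrix.vecMulVec v (star v)

/-- `e` is an orthonormal basis of `ℂ^N` (as an indexed family of vectors). -/
def Onb {N : Type*} [Fintype N] [DecidableEq N] (e : N → N → ℂ) : Prop :=
  ∀ i j, (∑ k, star (e i k) * e j k) = if i = j then (1 : ℂ) else 0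

def IsUnitary {N : Type*} [Fintype N] [DecidableEq N] (U : Matrix N N ℂ) : Prop :=
  Uᴴ * U = 1 ∧ U * Uᴴ = 1

/-- A product state with respect to the bipartition `α | β`. -/
def IsProduct {α β : Type*} [Fintype α] [Fintype β]
    (ρ : Matrix (α × β) (α × β) ℂ) : Prop :=
  ∃ (ρA : Matrix α α ℂ) (ρB : Matrix β β ℂ),
    IsDensity ρA ∧ IsDensity ρB ∧ ρ = ρA ⊗ₖ ρB

/-- Classically correlated with respect to the bipartition `α | β`. -/
def IsCC {α β : Type*} [Fintype α] [DecidableEq α] [Fintype β] [DecidableEq β]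
    (ρ : Matrix (α × β) (α × β) ℂ) : Prop :=
  ∃ (e : α → α → ℂ) (f : β → β → ℂ) (p : α → β → ℝ),
    Onb e ∧ Onb f ∧ (∀ i j, 0 ≤ p i j) ∧ (∑ i, ∑ j, p i j) = 1 ∧
    ρ = ∑ i, ∑ j, ((p i j : ℂ)) • (proj (e i) ⊗ₖ proj (f j))

/-- Partial trace over the second tensor factor. -/
noncomputable def ptrace2 {a b : Type*} [Fintype b] (X : Matrix (a × b) (a × b) ℂ) : Matrix a a ℂ :=
  Matrix.of fun i j => ∑ k, X (i, k) (j, k)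

/-- Partial trace over the first tensor factor. -/
noncomputable def ptrace1 {a b : Type*} [Fintype a] (X : Matrix (a × b) (a × b) ℂ) : Matrix b b ℂ :=
  Matrix.of fun i j => ∑ k, X (k, i) (k, j)

/-- Apply a Kraus family to a matrix: `σ ↦ Σ_k K_k σ K_k†`. -/
noncomputable def kraus {N : Type*} [Fintype N] {d : ℕ} (K : Fin d → Matrix N N ℂ)
    (σ : Matrix N N ℂ) : Matrix N N ℂ :=
  ∑ k, K k * σ * (K k)ᴴ

/-- A quantum channel of Kraus rank at most `d`. -/
def IsChannel {N : Type*} [Fintype N] [DecidableEq N] (d : ℕ)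
    (Φ : Matrix N N ℂ → Matrix N N ℂ) : Prop :=
  ∃ K : Fin d → Matrix N N ℂ,
    (∑ k, (K k)ᴴ * K k) = 1 ∧ ∀ σ, Φ σ = kraus K σ

/-- The local operation `Φ_A ⊗ Φ_B` determined by two Kraus families. -/
noncomputable def localKraus {α β : Type*} [Fintype α] [Fintype β] {dA dB : ℕ}
    (KA : Fin dA → Matrix α α ℂ) (KB : Fin dB → Matrix β β ℂ)
    (σ : Matrix (α × β) (α × β) ℂ) : Matrix (α × β) (α × β) ℂ :=
  ∑ k, ∑ l, (KA k ⊗ₖ KB l) * σ * (KA k ⊗ₖ KB l)ᴴ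

/-- A local operation of rank at most `d`: `Φ_A ⊗ Φ_B` with both local channels of
Kraus rank at most `d`. -/
def IsLocalOp {α β : Type*} [Fintype α] [DecidableEq α] [Fintype β] [DecidableEq β] (d : ℕ)
    (Φ : Matrix (α × β) (α × β) ℂ → Matrix (α × β) (α × β) ℂ) : Prop :=
  ∃ (KA : Fin d → Matrix α α ℂ) (KB : Fin d → Matrix β β ℂ),
    (∑ k, (KA k)ᴴ * KA k) = 1 ∧ (∑ l, (KB l)ᴴ * KB l) = 1 ∧
    ∀ σ, Φ σ = localKraus KA KB σ

/-- The potential quantumness of rank `d` associated with the quantumness measure `Q`. -/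
noncomputable def PQ {α β : Type*} [Fintype α] [DecidableEq α] [Fintype β] [DecidableEq β]
    (d : ℕ) (Q : Matrix (α × β) (α × β) ℂ → ℝ)
    (ρ : Matrix (α × β) (α × β) ℂ) : EReal :=
  sSup {x : EReal | ∃ Φ, IsLocalOp d Φ ∧ x = (Q (Φ ρ) : EReal)}

/-- The extended state `η ⊗ ρ ⊗ η`, where `η = |0⟩⟨0|` is the rank-one projector onto
the first standard basis vector of `ℂ^d`, on `(ℂ^d ⊗ α) ⊗ (β ⊗ ℂ^d)`. -/
noncomputable def extAnc {α β : Type*} (d : ℕ)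
    (ρ : Matrix (α × β) (α × β) ℂ) :
    Matrix ((Fin d × α) × (β × Fin d)) ((Fin d × α) × (β × Fin d)) ℂ :=
  Matrix.of fun p q =>
    (if p.1.1.val = 0 ∧ q.1.1.val = 0 then (1 : ℂ) else 0) *
      ρ (p.1.2, p.2.1) (q.1.2, q.2.1) *
      (if p.2.2.val = 0 ∧ q.2.2.val = 0 then (1 : ℂ) else 0)

/-- Partial trace over the two ancillary factors (the first and the fourth). -/
noncomputable def ptraceAnc {α β : Type*} {d : ℕ}
    (X : Matrix ((Fin d × α) × (β × Fin d)) ((Fin d × α) × (β × Fin d)) ℂ) :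
    Matrix (α × β) (α × β) ℂ :=
  Matrix.of fun p q => ∑ a : Fin d, ∑ b : Fin d,
    X ((a, p.1), (p.2, b)) ((a, q.1), (q.2, b))

/-- The standard basis vector `|0⟩` of `ℂ²`. -/
noncomputable def ket0 : Fin 2 → ℂ := ![1, 0]

/-- The standard basis vector `|1⟩` of `ℂ²`. -/
noncomputable def ket1 : Fin 2 → ℂ := ![0, 1]

/-- The vector `|+⟩ = (|0⟩ + |1⟩)/√2` of `ℂ²`. -/
noncomputable def ketPlus : Fin 2 → ℂ :=
  ![1 / (Real.sqrt 2 : ℂ), 1 / (Real.sqrt 2 : ℂ)]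

/-- The two-qubit state `σ_p = p |0⟩⟨0| ⊗ |0⟩⟨0| + (1−p) |+⟩⟨+| ⊗ |+⟩⟨+|`. -/
noncomputable def sigmaP (p : ℝ) : Matrix (Fin 2 × Fin 2) (Fin 2 × Fin 2) ℂ :=
  (p : ℂ) • (proj ket0 ⊗ₖ proj ket0) +
    ((1 - p : ℝ) : ℂ) • (proj ketPlus ⊗ₖ proj ketPlus)

/-- The four-qubit state
`ρ = p (|0⟩⟨0| ⊗ |0⟩⟨0|) ⊗ (|0⟩⟨0| ⊗ |0⟩⟨0|)
   + (1−p) (|1⟩⟨1| ⊗ |+⟩⟨+|) ⊗ (|+⟩⟨+| ⊗ |1⟩⟨1|)`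
on `(ℂ² ⊗ ℂ²) ⊗ (ℂ² ⊗ ℂ²)`, with `A` the first two qubits and `B` the last two. -/
noncomputable def rhoFour (p : ℝ) :
    Matrix ((Fin 2 × Fin 2) × (Fin 2 × Fin 2)) ((Fin 2 × Fin 2) × (Fin 2 × Fin 2)) ℂ :=
  (p : ℂ) • ((proj ket0 ⊗ₖ proj ket0) ⊗ₖ (proj ket0 ⊗ₖ proj ket0)) +
    ((1 - p : ℝ) : ℂ) • ((proj ket1 ⊗ₖ proj ketPlus) ⊗ₖ (proj ketPlus ⊗ₖ proj ket1))

/-! A classically correlated state `Σ p_ij |e_i⟩⟨e_i| ⊗ |f_j⟩⟨f_j|` commutes with `ρ_A ⊗ 1`,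
since its reduction `ρ_A = Σ_i (Σ_j p_ij) |e_i⟩⟨e_i|` is diagonal in the same basis `e`. For `σ_p`
this fails as soon as `0 < p < 1`, because `|0⟩⟨0|` and `|+⟩⟨+|` do not commute. On the other
hand `ρ` is classically correlated in the basis `|0⟩|0⟩, |0⟩|1⟩, |1⟩|+⟩, |1⟩|−⟩` of `A` and its
mirror image for `B`, and tracing out the outer qubits of its two terms leaves those of `σ_p`. -/

lemma proj_kronecker {α β : Type*} (v : α → ℂ) (w : β → ℂ) :
    proj (fun k : α × β => v k.1 * w k.2) = proj v ⊗ₖ proj w := by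
  ext x y
  simp only [proj, vecMulVec_apply, Pi.star_apply, kroneckerMap_apply, star_mul']
  ring

lemma proj_mul_proj {N : Type*} [Fintype N] (v w : N → ℂ) :
    proj v * proj w = (∑ k, star (v k) * w k) • vecMulVec v (star w) := by
  ext i j
  simp only [proj, mul_apply, vecMulVec_apply, Matrix.smul_apply, Pi.star_apply, smul_eq_mul,
    Finset.sum_mul]
  exact Finset.sum_congr rfl fun k _ => by ring

namespace Onb

variable {N : Type*} [Fintype N] [DecidableEq N] {e : N → N → ℂ}

lemma proj_mul_proj (he : Onb e) (i j : N) :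
    proj (e i) * proj (e j) = if i = j then proj (e i) else 0 := by
  rw [_root_.proj_mul_proj, he i j]
  split_ifs with h
  · subst h; exact one_smul _ _
  · exact zero_smul _ _

lemma commute_proj (he : Onb e) (i j : N) : Commute (proj (e i)) (proj (e j)) := by
  by_cases h : i = j
  · subst h; rfl
  · rw [Commute, SemiconjBy, he.proj_mul_proj, he.proj_mul_proj, if_neg h, if_neg (Ne.symm h)]

lemma trace_proj (he : Onb e) (i : N) : (proj (e i)).trace = 1 := by
  have h := he i i
  rw [if_pos rfl] at h
  rw [← h]
  exact Finset.sum_congr rfl fun k _ => by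
    simp only [proj, diag_apply, vecMulVec_apply, Pi.star_apply, mul_comm]

lemma comp_equiv {M : Type*} [Fintype M] [DecidableEq M] (he : Onb e) (σ : M ≃ N) :
    Onb fun i k => e (σ i) (σ k) := by
  intro i j
  rw [Fintype.sum_equiv σ _ (fun k => star (e (σ i) k) * e (σ j) k) (fun _ => rfl), he]
  exact if_congr σ.apply_eq_iff_eq rfl rfl

end Onb

def condProdBasis {α β : Type*} (u : α → α → ℂ) (v : α → β → β → ℂ) :
    α × β → α × β → ℂ :=
  fun i k => u i.1 k.1 * v i.1 i.2 k.2

lemma Onb.condProdBasis {α β : Type*} [Fintype α] [DecidableEq α] [Fintype β] [DecidableEq β]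
    {u : α → α → ℂ} {v : α → β → β → ℂ} (hu : Onb u) (hv : ∀ i, Onb (v i)) :
    Onb (_root_.condProdBasis u v) := by
  rintro ⟨i₁, i₂⟩ ⟨j₁, j₂⟩
  have hsplit : ∑ k : α × β,
      star (_root_.condProdBasis u v (i₁, i₂) k) * _root_.condProdBasis u v (j₁, j₂) k
      = (∑ k, star (u i₁ k) * u j₁ k) * ∑ k, star (v i₁ i₂ k) * v j₁ j₂ k := by
    rw [Finset.sum_mul_sum, ← Finset.univ_product_univ, Finset.sum_product]
    refine Finset.sum_congr rfl fun k₁ _ => Finset.sum_congr rfl fun k₂ _ => ?_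
    simp only [_root_.condProdBasis, star_mul']
    ring
  rw [hsplit, hu]
  by_cases h : i₁ = j₁
  · subst h; rw [if_pos rfl, one_mul, hv i₁ i₂ j₂]; simp
  · simp [h]

lemma isCC_smul_add_smul {α β : Type*} [Fintype α] [DecidableEq α] [Fintype β] [DecidableEq β]
    {e : α → α → ℂ} {f : β → β → ℂ} (he : Onb e) (hf : Onb f) {a b : ℝ} (ha : 0 ≤ a)
    (hb : 0 ≤ b) (hab : a + b = 1) (i₀ i₁ : α) (j₀ j₁ : β) :
    IsCC ((a : ℂ) • (proj (e i₀) ⊗ₖ proj (f j₀)) + (b : ℂ) • (proj (e i₁) ⊗ₖ proj (f j₁))) := by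
  refine ⟨e, f, fun i j => (if i = i₀ ∧ j = j₀ then a else 0) + (if i = i₁ ∧ j = j₁ then b else 0),
    he, hf, fun i j => by positivity, ?_, ?_⟩
  · simpa [ite_and, Finset.sum_add_distrib] using hab
  · simp [ite_and, add_smul, Finset.sum_add_distrib]

lemma ptrace2_sum_smul_kronecker {ι κ α β : Type*} [Fintype ι] [Fintype κ] [Fintype β]
    (c : ι → κ → ℂ) (A : ι → Matrix α α ℂ) (B : κ → Matrix β β ℂ) :
    ptrace2 (∑ i, ∑ j, c i j • (A i ⊗ₖ B j)) = ∑ i, ∑ j, (c i j * (B j).trace) • A i := by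
  ext x y
  simp only [ptrace2, of_apply, Matrix.sum_apply, Matrix.smul_apply, kroneckerMap_apply,
    smul_eq_mul, trace, diag_apply, Finset.mul_sum, Finset.sum_mul]
  rw [Finset.sum_comm]
  refine Finset.sum_congr rfl fun i _ => ?_
  rw [Finset.sum_comm]
  exact Finset.sum_congr rfl fun j _ => Finset.sum_congr rfl fun k _ => by ring

lemma commute_kronecker_one_of_commute {α β : Type*} [Fintype α] [Fintype β] [DecidableEq β]
    {A X : Matrix α α ℂ} (h : Commute A X) (B : Matrix β β ℂ) :
    Commute (A ⊗ₖ B) (X ⊗ₖ (1 : Matrix β β ℂ)) := by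
  rw [Commute, SemiconjBy, ← mul_kronecker_mul, ← mul_kronecker_mul, h.eq, Matrix.mul_one,
    Matrix.one_mul]

lemma IsCC.commute_ptrace2_kronecker_one {α β : Type*} [Fintype α] [DecidableEq α] [Fintype β]
    [DecidableEq β] {ρ : Matrix (α × β) (α × β) ℂ} (h : IsCC ρ) :
    Commute ρ (ptrace2 ρ ⊗ₖ (1 : Matrix β β ℂ)) := by
  obtain ⟨e, f, q, he, -, -, -, rfl⟩ := h
  rw [ptrace2_sum_smul_kronecker]
  refine Commute.sum_left _ _ _ fun i _ => Commute.sum_left _ _ _ fun j _ => ?_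
  refine (commute_kronecker_one_of_commute ?_ _).smul_left _
  exact Commute.sum_right _ _ _ fun k _ => Commute.sum_right _ _ _ fun l _ =>
    (he.commute_proj i k).smul_right _

section Ancilla

variable {α β : Type*} {d : ℕ}

lemma ptraceAnc_add
    (X Y : Matrix ((Fin d × α) × (β × Fin d)) ((Fin d × α) × (β × Fin d)) ℂ) :
    ptraceAnc (X + Y) = ptraceAnc X + ptraceAnc Y := by
  ext x y
  simp [ptraceAnc, Finset.sum_add_distrib]

lemma ptraceAnc_smul (c : ℂ)
    (X : Matrix ((Fin d × α) × (β × Fin d)) ((Fin d × α) × (β × Fin d)) ℂ) :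
    ptraceAnc (c • X) = c • ptraceAnc X := by
  ext x y
  simp [ptraceAnc, Finset.mul_sum]

lemma ptraceAnc_kronecker (A D : Matrix (Fin d) (Fin d) ℂ) (B : Matrix α α ℂ)
    (C : Matrix β β ℂ) :
    ptraceAnc ((A ⊗ₖ B) ⊗ₖ (C ⊗ₖ D)) = (A.trace * D.trace) • (B ⊗ₖ C) := by
  ext x y
  simp only [ptraceAnc, of_apply, kroneckerMap_apply, Matrix.smul_apply, smul_eq_mul, trace,
    diag_apply, Finset.sum_mul, Finset.mul_sum]
  rw [Finset.sum_comm]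
  exact Finset.sum_congr rfl fun a _ => Finset.sum_congr rfl fun b _ => by ring

end Ancilla

lemma inv_sqrt_two_mul_inv_sqrt_two :
    ((Real.sqrt 2 : ℝ) : ℂ)⁻¹ * ((Real.sqrt 2 : ℝ) : ℂ)⁻¹ = 2⁻¹ := by
  rw [← mul_inv, ← Complex.ofReal_mul, Real.mul_self_sqrt zero_le_two, Complex.ofReal_ofNat]

noncomputable def ketMinus : Fin 2 → ℂ :=
  ![1 / (Real.sqrt 2 : ℂ), -(1 / (Real.sqrt 2 : ℂ))]

noncomputable def qubitBasis : Fin 2 → Fin 2 → ℂ := ![ket0, ket1]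

noncomputable def hadamardBasis : Fin 2 → Fin 2 → ℂ := ![ketPlus, ketMinus]

lemma onb_qubitBasis : Onb qubitBasis := by
  intro i j
  fin_cases i <;> fin_cases j <;> simp [qubitBasis, ket0, ket1]

lemma onb_hadamardBasis : Onb hadamardBasis := by
  intro i j
  fin_cases i <;> fin_cases j <;>
    simp [hadamardBasis, ketPlus, ketMinus, inv_sqrt_two_mul_inv_sqrt_two, ← two_mul]

lemma proj_ket0 : proj ket0 = !![1, 0; 0, 0] := by
  ext i j; fin_cases i <;> fin_cases j <;> simp [proj, vecMulVec, ket0]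

lemma proj_ketPlus : proj ketPlus = of fun _ _ => (1 / 2 : ℂ) := by
  ext i j
  fin_cases i <;> fin_cases j <;> simp [proj, vecMulVec, ketPlus, inv_sqrt_two_mul_inv_sqrt_two]

noncomputable def basisA : Fin 2 × Fin 2 → Fin 2 × Fin 2 → ℂ :=
  condProdBasis qubitBasis ![qubitBasis, hadamardBasis]

noncomputable def basisB : Fin 2 × Fin 2 → Fin 2 × Fin 2 → ℂ :=
  fun j k => basisA j.swap k.swap

lemma onb_basisA : Onb basisA :=
  Onb.condProdBasis onb_qubitBasis fun i => by
    fin_cases i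
    exacts [onb_qubitBasis, onb_hadamardBasis]

lemma onb_basisB : Onb basisB :=
  onb_basisA.comp_equiv (Equiv.prodComm _ _)

lemma isCC_rhoFour {p : ℝ} (hp0 : 0 ≤ p) (hp1 : p ≤ 1) : IsCC (rhoFour p) := by
  have hB (v w : Fin 2 → ℂ) :
      proj (fun k : Fin 2 × Fin 2 => w k.2 * v k.1) = proj v ⊗ₖ proj w := by
    rw [← proj_kronecker]
    simp_rw [mul_comm]
  have h := isCC_smul_add_smul onb_basisA onb_basisB hp0 (sub_nonneg.2 hp1) (add_sub_cancel p 1)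
    (0, 0) (1, 0) (0, 0) (0, 1)
  rwa [show proj (basisA (0, 0)) = proj ket0 ⊗ₖ proj ket0 from proj_kronecker _ _,
    show proj (basisA (1, 0)) = proj ket1 ⊗ₖ proj ketPlus from proj_kronecker _ _,
    show proj (basisB (0, 0)) = proj ket0 ⊗ₖ proj ket0 from hB _ _,
    show proj (basisB (0, 1)) = proj ketPlus ⊗ₖ proj ket1 from hB _ _] at h

lemma ptraceAnc_rhoFour (p : ℝ) : ptraceAnc (rhoFour p) = sigmaP p := by
  have h0 : (proj ket0).trace = 1 := onb_qubitBasis.trace_proj 0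
  have h1 : (proj ket1).trace = 1 := onb_qubitBasis.trace_proj 1
  simp only [rhoFour, sigmaP, ptraceAnc_add, ptraceAnc_smul, ptraceAnc_kronecker, h0, h1,
    mul_one, one_smul]

lemma not_isCC_sigmaP {p : ℝ} (hp0 : 0 < p) (hp1 : p < 1) : ¬ IsCC (sigmaP p) := by
  intro h
  -- the `((0,0),(1,1))` entries of `σ (σ_A ⊗ 1)` and `(σ_A ⊗ 1) σ` are `(1-p)²/4` and `(1-p)/4`
  have hentry := congrFun (congrFun h.commute_ptrace2_kronecker_one.eq (0, 0)) (1, 1)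
  simp only [mul_apply, sigmaP, proj_ketPlus, proj_ket0, ptrace2, of_apply, Matrix.add_apply,
    Matrix.smul_apply, kroneckerMap_apply, one_apply, smul_eq_mul, Fintype.sum_prod_type,
    Fin.sum_univ_two] at hentry
  norm_num at hentry
  have hprod : ((p * (1 - p) : ℝ) : ℂ) = 0 := by
    push_cast
    linear_combination (-4 : ℂ) * hentry
  exact (mul_pos hp0 (sub_pos.2 hp1)).ne' (Complex.ofReal_eq_zero.1 hprod)

/-- For `0 < p < 1`: (i) `ρ = rhoFour p` is classically correlated with
respect to the bipartition `A | B` (first two qubits | last two qubits); (ii) its partial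
trace over the first and fourth qubits equals
`σ_p = p |0⟩⟨0| ⊗ |0⟩⟨0| + (1−p) |+⟩⟨+| ⊗ |+⟩⟨+|`, which is not classically correlated.
Hence `ρ` is a CC state with a quantum-correlated reduction preserving the bipartition. -/
theorem statement7 (p : ℝ) (hp0 : 0 < p) (hp1 : p < 1) :
    IsCC (rhoFour p) ∧
      ptraceAnc (rhoFour p) = sigmaP p ∧
      ¬ IsCC (sigmaP p) :=
  ⟨isCC_rhoFour hp0.le hp1.le, ptraceAnc_rhoFour p, not_isCC_sigmaP hp0 hp1⟩
end

section
/- For every pure density matrix ρ = |ψ⟩⟨ψ| on ℂ^m ⊗ ℂ^n, the quantum discord with measurements on the first subsystem equals the entropy of entanglement: δ(ρ) = S(Tr_2(ρ)). In particular, the optimal measurement achieves sup_Π I(Π[ρ]) = S(Tr_2(ρ)), while I(ρ) = 2 S(Tr_2(ρ)). -/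
open Matrix
open scoped Kronecker ComplexOrder

/-- The von Neumann entropy `S(ρ) = −Σ λ_k log λ_k` of a (Hermitian) matrix, via its
eigenvalues; junk value `0` on non-Hermitian matrices. -/
noncomputable def vnEntropy {N : Type*} [Fintype N] [DecidableEq N]
    (ρ : Matrix N N ℂ) : ℝ :=
  if h : ρ.IsHermitian then ∑ k, Real.negMulLog (h.eigenvalues k) else 0

/-- The quantum mutual information `I(ρ) = S(ρ_A) + S(ρ_B) − S(ρ)`. -/
noncomputable def mutualInfo {α β : Type*} [Fintype α] [DecidableEq α] [Fintype β]
    [DecidableEq β] (ρ : Matrix (α × β) (α × β) ℂ) : ℝ :=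
  vnEntropy (ptrace2 ρ) + vnEntropy (ptrace1 ρ) - vnEntropy ρ

/-- The post-measurement state `Π[ρ] = Σ_i (Π_i ⊗ I) ρ (Π_i ⊗ I)` for the projective
rank-one measurement on the first subsystem given by the orthonormal basis `e`. -/
noncomputable def postMeas {α β : Type*} [Fintype α] [DecidableEq α] [Fintype β]
    [DecidableEq β] (e : α → α → ℂ) (ρ : Matrix (α × β) (α × β) ℂ) :
    Matrix (α × β) (α × β) ℂ :=
  ∑ i, (proj (e i) ⊗ₖ (1 : Matrix β β ℂ)) * ρ * (proj (e i) ⊗ₖ (1 : Matrix β β ℂ))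

/-- The quantum discord with measurements on the first subsystem:
`δ(ρ) = I(ρ) − sup_Π I(Π[ρ])`, the supremum running over all projective rank-one
measurements (orthonormal bases) of the first subsystem. -/
noncomputable def discord {α β : Type*} [Fintype α] [DecidableEq α] [Fintype β]
    [DecidableEq β] (ρ : Matrix (α × β) (α × β) ℂ) : ℝ :=
  mutualInfo ρ - sSup {x : ℝ | ∃ e, Onb e ∧ x = mutualInfo (postMeas e ρ)}

/-!
Write `M` for the coefficient matrix of `ψ`. The marginals of `|ψ⟩⟨ψ|` are `M Mᴴ` and
`(Mᴴ M)ᵀ`, which have the same nonzero spectrum, and the global state is pure, so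
`I(ρ) = 2 S(ρ_A)`. Measuring the first factor in an orthonormal basis `(e_i)` does not change
`ρ_B` and turns `ρ` into the mixture of the mutually orthogonal vectors `e_i ⊗ c_i` with
`c_i = ⟨e_i|ψ`; both this state and its first marginal `Σ_i ‖c_i‖² |e_i⟩⟨e_i|` have the Shannon
entropy of `(‖c_i‖²)_i` as entropy. Hence every measurement gives `I(Π[ρ]) = S(ρ_B) = S(ρ_A)`.
Entropies are compared through characteristic polynomials, which determine the spectrum only up
to extra zeros; these do not matter because `0 log 0 = 0`.
-/

open Polynomial

section Spectrum

variable {N J : Type*} [Fintype N] [DecidableEq N] [Fintype J] [DecidableEq J]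

lemma vnEntropy_eq_sum_roots_charpoly {H : Matrix N N ℂ} (hH : H.IsHermitian) :
    vnEntropy H = (H.charpoly.roots.map fun z => Real.negMulLog z.re).sum := by
  rw [vnEntropy, dif_pos hH, hH.roots_charpoly_eq_eigenvalues, Multiset.map_map]
  rfl

lemma vnEntropy_eq_of_X_pow_mul_charpoly_eq {H : Matrix N N ℂ} {K : Matrix J J ℂ}
    (hH : H.IsHermitian) (hK : K.IsHermitian) {k l : ℕ}
    (h : X ^ k * H.charpoly = X ^ l * K.charpoly) : vnEntropy H = vnEntropy K := by
  have hroots := congrArg (fun p : ℂ[X] => (p.roots.map fun z => Real.negMulLog z.re).sum) h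
  simp only [roots_mul (mul_ne_zero (pow_ne_zero _ X_ne_zero) (Matrix.charpoly_monic _).ne_zero),
    roots_X_pow, Multiset.map_add, Multiset.sum_add, Multiset.map_nsmul, Multiset.sum_nsmul,
    Multiset.map_singleton, Multiset.sum_singleton, Complex.zero_re, Real.negMulLog_zero,
    smul_zero, zero_add] at hroots
  rwa [vnEntropy_eq_sum_roots_charpoly hH, vnEntropy_eq_sum_roots_charpoly hK]

lemma vnEntropy_transpose {H : Matrix N N ℂ} (hH : H.IsHermitian) : vnEntropy Hᵀ = vnEntropy H :=
  vnEntropy_eq_of_X_pow_mul_charpoly_eq hH.transpose hH (k := 0) (l := 0)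
    (by rw [charpoly_transpose])

lemma vnEntropy_mul_conjTranspose_comm (W : Matrix N J ℂ) :
    vnEntropy (W * Wᴴ) = vnEntropy (Wᴴ * W) :=
  vnEntropy_eq_of_X_pow_mul_charpoly_eq (isHermitian_mul_conjTranspose_self W)
    (isHermitian_conjTranspose_mul_self W) (charpoly_mul_comm' W Wᴴ)

lemma vnEntropy_diagonal {d : J → ℂ} (hd : (diagonal d).IsHermitian) :
    vnEntropy (diagonal d) = ∑ j, Real.negMulLog (d j).re := by
  have hprod : ∏ j, (X - C (d j)) = ((Finset.univ.val.map d).map fun a => X - C a).prod := by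
    rw [Multiset.map_map]
    rfl
  rw [vnEntropy_eq_sum_roots_charpoly hd, charpoly_diagonal, hprod, roots_multiset_prod_X_sub_C,
    Multiset.map_map]
  rfl

end Spectrum

section Families

variable {ι N : Type*}

lemma sum_proj_eq_mul_conjTranspose [Fintype ι] (g : ι → N → ℂ) :
    ∑ i, proj (g i) = (of g)ᵀ * ((of g)ᵀ)ᴴ := by
  ext k k'
  simp [Matrix.sum_apply, proj, vecMulVec_apply, Matrix.mul_apply]

lemma conjTranspose_mul_self_transpose_of [Fintype N] (g : ι → N → ℂ) :
    ((of g)ᵀ)ᴴ * (of g)ᵀ = of fun i j => star (g i) ⬝ᵥ g j := by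
  ext i j
  simp [Matrix.mul_apply, dotProduct]

lemma vnEntropy_sum_proj [Fintype ι] [DecidableEq ι] [Fintype N] [DecidableEq N]
    {g : ι → N → ℂ} (hg : Pairwise fun i j => star (g i) ⬝ᵥ g j = 0) :
    vnEntropy (∑ i, proj (g i)) = ∑ i, Real.negMulLog (star (g i) ⬝ᵥ g i).re := by
  have hgram : ((of g)ᵀ)ᴴ * (of g)ᵀ = diagonal fun i => star (g i) ⬝ᵥ g i := by
    rw [conjTranspose_mul_self_transpose_of]
    ext i j
    rcases eq_or_ne i j with rfl | hij
    · simp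
    · simp [hg hij, hij]
  rw [sum_proj_eq_mul_conjTranspose, vnEntropy_mul_conjTranspose_comm, hgram,
    vnEntropy_diagonal (hgram ▸ isHermitian_conjTranspose_mul_self _)]

lemma vnEntropy_proj [Fintype N] [DecidableEq N] {ψ : N → ℂ} (hψ : star ψ ⬝ᵥ ψ = 1) :
    vnEntropy (proj ψ) = 0 := by
  simpa [hψ] using vnEntropy_sum_proj (g := fun _ : Unit => ψ) Subsingleton.pairwise

lemma onb_iff_conjTranspose_mul_self [Fintype N] [DecidableEq N] {e : N → N → ℂ} :
    Onb e ↔ ((of e)ᵀ)ᴴ * (of e)ᵀ = 1 := by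
  rw [conjTranspose_mul_self_transpose_of, ← Matrix.ext_iff]
  rfl

namespace Onb

variable [Fintype N] [DecidableEq N] {e : N → N → ℂ}

lemma star_dotProduct (he : Onb e) (i j : N) :
    star (e i) ⬝ᵥ e j = if i = j then 1 else 0 :=
  he i j

lemma star_dotProduct_self (he : Onb e) (i : N) : star (e i) ⬝ᵥ e i = 1 :=
  (he i i).trans (if_pos rfl)

lemma sum_proj (he : Onb e) : ∑ i, proj (e i) = 1 := by
  rw [sum_proj_eq_mul_conjTranspose]
  exact mul_eq_one_comm.mp (onb_iff_conjTranspose_mul_self.mp he)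

lemma proj_mul_self (he : Onb e) (i : N) : proj (e i) * proj (e i) = proj (e i) := by
  rw [proj, vecMulVec_mul_vecMulVec, he.star_dotProduct_self, one_smul]

lemma vnEntropy_sum_smul_proj (he : Onb e) {d : N → ℂ} (hd : (diagonal d).IsHermitian) :
    vnEntropy (∑ i, d i • proj (e i)) = ∑ i, Real.negMulLog (d i).re := by
  have hconj : ∑ i, d i • proj (e i) = (of e)ᵀ * diagonal d * ((of e)ᵀ)ᴴ := by
    ext k k'
    simp only [Matrix.sum_apply, Matrix.smul_apply, proj, vecMulVec_apply, Matrix.mul_apply,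
      diagonal_apply, mul_ite, mul_zero, Finset.sum_ite_eq', Finset.mem_univ, if_true,
      transpose_apply, conjTranspose_apply, of_apply, Pi.star_apply, smul_eq_mul]
    exact Finset.sum_congr rfl fun i _ => by ring
  rw [hconj, ← vnEntropy_diagonal hd]
  refine vnEntropy_eq_of_X_pow_mul_charpoly_eq (isHermitian_mul_mul_conjTranspose _ hd) hd
    (k := 0) (l := 0) ?_
  rw [Matrix.mul_assoc, charpoly_mul_comm, Matrix.mul_assoc,
    onb_iff_conjTranspose_mul_self.mp he, Matrix.mul_one]

end Onb

end Families

section Bipartite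

variable {α β : Type*}

def coeffMatrix (ψ : α × β → ℂ) : Matrix α β ℂ := of fun a b => ψ (a, b)

def tensorVec (v : α → ℂ) (w : β → ℂ) : α × β → ℂ := fun k => v k.1 * w k.2

lemma ptrace1_sum [Fintype α] {ι : Type*} [Fintype ι] (X : ι → Matrix (α × β) (α × β) ℂ) :
    ptrace1 (∑ i, X i) = ∑ i, ptrace1 (X i) := by
  ext b b'
  simp only [ptrace1, of_apply, Matrix.sum_apply]
  exact Finset.sum_comm

lemma ptrace2_sum [Fintype β] {ι : Type*} [Fintype ι] (X : ι → Matrix (α × β) (α × β) ℂ) :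
    ptrace2 (∑ i, X i) = ∑ i, ptrace2 (X i) := by
  ext a a'
  simp only [ptrace2, of_apply, Matrix.sum_apply]
  exact Finset.sum_comm

lemma ptrace1_kronecker_one_mul_comm [Fintype α] [Fintype β] [DecidableEq β] (A : Matrix α α ℂ)
    (X : Matrix (α × β) (α × β) ℂ) :
    ptrace1 ((A ⊗ₖ (1 : Matrix β β ℂ)) * X) = ptrace1 (X * (A ⊗ₖ 1)) := by
  ext b b'
  simp only [ptrace1, Matrix.mul_apply, kroneckerMap_apply, one_apply, mul_ite, mul_one, mul_zero,
    ite_mul, zero_mul, Fintype.sum_prod_type, Finset.sum_ite_eq, Finset.sum_ite_eq',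
    Finset.mem_univ, if_true, of_apply]
  rw [Finset.sum_comm]
  exact Finset.sum_congr rfl fun _ _ => Finset.sum_congr rfl fun _ _ => mul_comm _ _

lemma ptrace2_proj [Fintype β] (ψ : α × β → ℂ) :
    ptrace2 (proj ψ) = coeffMatrix ψ * (coeffMatrix ψ)ᴴ := by
  ext a a'
  simp [ptrace2, proj, coeffMatrix, vecMulVec_apply, Matrix.mul_apply]

lemma ptrace1_proj [Fintype α] (ψ : α × β → ℂ) :
    ptrace1 (proj ψ) = ((coeffMatrix ψ)ᴴ * coeffMatrix ψ)ᵀ := by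
  ext b b'
  simp [ptrace1, proj, coeffMatrix, vecMulVec_apply, Matrix.mul_apply, mul_comm]

lemma vnEntropy_ptrace1_proj [Fintype α] [DecidableEq α] [Fintype β] [DecidableEq β]
    (ψ : α × β → ℂ) :
    vnEntropy (ptrace1 (proj ψ)) = vnEntropy (ptrace2 (proj ψ)) := by
  rw [ptrace1_proj, ptrace2_proj, vnEntropy_transpose (isHermitian_conjTranspose_mul_self _),
    vnEntropy_mul_conjTranspose_comm]

lemma star_tensorVec_dotProduct [Fintype α] [Fintype β] (v v' : α → ℂ) (w w' : β → ℂ) :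
    star (tensorVec v w) ⬝ᵥ tensorVec v' w' = (star v ⬝ᵥ v') * (star w ⬝ᵥ w') := by
  simp only [dotProduct, tensorVec, Fintype.sum_prod_type, Finset.sum_mul_sum, Pi.star_apply,
    star_mul']
  exact Finset.sum_congr rfl fun _ _ => Finset.sum_congr rfl fun _ _ => by ring

lemma ptrace2_proj_tensorVec [Fintype β] (v : α → ℂ) (w : β → ℂ) :
    ptrace2 (proj (tensorVec v w)) = (star w ⬝ᵥ w) • proj v := by
  ext a a'
  simp only [ptrace2, proj, tensorVec, of_apply, vecMulVec_apply, Pi.star_apply, star_mul',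
    Matrix.smul_apply, smul_eq_mul, dotProduct, Finset.sum_mul]
  exact Finset.sum_congr rfl fun _ _ => by ring

lemma proj_kronecker_one_mul_proj_mul [Fintype α] [Fintype β] [DecidableEq β] (v : α → ℂ)
    (ψ : α × β → ℂ) :
    (proj v ⊗ₖ (1 : Matrix β β ℂ)) * proj ψ * (proj v ⊗ₖ 1) =
      proj (tensorVec v (star v ᵥ* coeffMatrix ψ)) := by
  ext ⟨a, b⟩ ⟨a', b'⟩
  simp only [proj, Matrix.mul_apply, kroneckerMap_apply, vecMulVec_apply, Pi.star_apply,
    one_apply, mul_ite, mul_one, mul_zero, ite_mul, zero_mul, Fintype.sum_prod_type,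
    Finset.sum_ite_eq, Finset.sum_ite_eq', Finset.mem_univ, if_true, coeffMatrix, tensorVec,
    vecMul, dotProduct, of_apply, Finset.mul_sum, Finset.sum_mul, star_sum, star_mul', star_star]
  exact Finset.sum_congr rfl fun _ _ => Finset.sum_congr rfl fun _ _ => by ring

lemma postMeas_proj [Fintype α] [DecidableEq α] [Fintype β] [DecidableEq β] (e : α → α → ℂ)
    (ψ : α × β → ℂ) :
    postMeas e (proj ψ) = ∑ i, proj (tensorVec (e i) (star (e i) ᵥ* coeffMatrix ψ)) :=
  Finset.sum_congr rfl fun i _ => proj_kronecker_one_mul_proj_mul (e i) ψ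

lemma Onb.ptrace1_postMeas [Fintype α] [DecidableEq α] [Fintype β] [DecidableEq β]
    {e : α → α → ℂ} (he : Onb e) (ρ : Matrix (α × β) (α × β) ℂ) :
    ptrace1 (postMeas e ρ) = ptrace1 ρ := by
  have hsum : ∑ i, (proj (e i) ⊗ₖ (1 : Matrix β β ℂ)) = 1 := by
    rw [← one_kronecker_one, ← he.sum_proj]
    ext
    simp [Matrix.sum_apply, Finset.sum_mul]
  have hterm : ∀ i, ptrace1 ((proj (e i) ⊗ₖ (1 : Matrix β β ℂ)) * ρ * (proj (e i) ⊗ₖ 1)) =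
      ptrace1 (ρ * (proj (e i) ⊗ₖ 1)) := fun i => by
    rw [Matrix.mul_assoc, ptrace1_kronecker_one_mul_comm, Matrix.mul_assoc, ← mul_kronecker_mul,
      he.proj_mul_self, Matrix.mul_one]
  rw [postMeas, ptrace1_sum, Finset.sum_congr rfl fun i _ => hterm i, ← ptrace1_sum,
    ← Matrix.mul_sum, hsum, Matrix.mul_one]

lemma Onb.mutualInfo_postMeas_proj [Fintype α] [DecidableEq α] [Fintype β] [DecidableEq β]
    {e : α → α → ℂ} (he : Onb e) (ψ : α × β → ℂ) :
    mutualInfo (postMeas e (proj ψ)) = vnEntropy (ptrace2 (proj ψ)) := by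
  set c : α → β → ℂ := fun i => star (e i) ᵥ* coeffMatrix ψ
  have hA : vnEntropy (ptrace2 (postMeas e (proj ψ))) =
      ∑ i, Real.negMulLog (star (c i) ⬝ᵥ c i).re := by
    simp only [postMeas_proj, ptrace2_sum, ptrace2_proj_tensorVec]
    exact he.vnEntropy_sum_smul_proj
      (isHermitian_diagonal_of_self_adjoint _ (funext fun i => (Matrix.star_dotProduct _ _).symm))
  have hAB : vnEntropy (postMeas e (proj ψ)) = ∑ i, Real.negMulLog (star (c i) ⬝ᵥ c i).re := by
    have horth : Pairwise fun i j => star (tensorVec (e i) (c i)) ⬝ᵥ tensorVec (e j) (c j) = 0 :=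
      fun i j hij => by
        simp only [star_tensorVec_dotProduct, he.star_dotProduct, if_neg hij, zero_mul]
    simp only [postMeas_proj, vnEntropy_sum_proj horth, star_tensorVec_dotProduct,
      he.star_dotProduct_self, one_mul, c]
  rw [mutualInfo, hA, hAB, he.ptrace1_postMeas, vnEntropy_ptrace1_proj, add_sub_cancel_left]

end Bipartite

lemma onb_single {N : Type*} [Fintype N] [DecidableEq N] : Onb fun i : N => Pi.single i 1 := by
  intro i j
  simp [Pi.single_apply, eq_comm]

lemma setOf_mutualInfo_postMeas_proj {α β : Type*} [Fintype α] [DecidableEq α] [Fintype β]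
    [DecidableEq β] (ψ : α × β → ℂ) :
    {x : ℝ | ∃ e, Onb e ∧ x = mutualInfo (postMeas e (proj ψ))} =
      {vnEntropy (ptrace2 (proj ψ))} := by
  ext x
  constructor
  · rintro ⟨e, he, rfl⟩
    exact he.mutualInfo_postMeas_proj ψ
  · rintro rfl
    exact ⟨_, onb_single, (onb_single.mutualInfo_postMeas_proj ψ).symm⟩

/-- For every pure density matrix `ρ = |ψ⟩⟨ψ|` on `ℂ^m ⊗ ℂ^n`, the
quantum discord equals the entropy of entanglement `S(Tr_2 ρ)`; the optimal measurement
achieves `sup_Π I(Π[ρ]) = S(Tr_2 ρ)`, while `I(ρ) = 2 S(Tr_2 ρ)`. -/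
theorem statement18 {m n : ℕ} (ψ : Fin m × Fin n → ℂ)
    (hψ : (∑ k, star (ψ k) * ψ k) = 1) :
    discord (proj ψ) = vnEntropy (ptrace2 (proj ψ)) ∧
      sSup {x : ℝ | ∃ e, Onb e ∧ x = mutualInfo (postMeas e (proj ψ))} =
        vnEntropy (ptrace2 (proj ψ)) ∧
      mutualInfo (proj ψ) = 2 * vnEntropy (ptrace2 (proj ψ)) := by
  have hsup : sSup {x : ℝ | ∃ e, Onb e ∧ x = mutualInfo (postMeas e (proj ψ))} =
      vnEntropy (ptrace2 (proj ψ)) := by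
    rw [setOf_mutualInfo_postMeas_proj, csSup_singleton]
  have hI : mutualInfo (proj ψ) = 2 * vnEntropy (ptrace2 (proj ψ)) := by
    rw [mutualInfo, vnEntropy_ptrace1_proj, vnEntropy_proj hψ]
    ring
  refine ⟨?_, hsup, hI⟩
  rw [discord, hsup, hI]
  ring
end
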